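/- arXiv:1303.4031 — 2 statements merged into one kernel-verified Lean document; each statement's English description precedes it below -/
import Mathlib

section
/- Let G = (A ∪ B, E) be a finite bipartite graph with edge-weight function Weight, and let l be a feasible labeling of G (i.e., l(a) + l(b) ≥ Weight(a,b) for every edge (a,b) ∈ E). Let S ⊆ A be nonempty with T = N_l(S) ≠ B, suppose every pair (a,b) with a ∈ S and b ∈ B \ T is an edge of G, and set α_l = min over a ∈ S, b ∉ T of (l(a) + l(b) − Weight(a,b)). Define l'(v) = l(v) − α_l if v ∈ S, l'(v) = l(v) + α_l if v ∈ T, and l'(v) = l(v) otherwise. Then l' is also a feasible labeling of G. -/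
/-- Let `G = (A ∪ B, E)` be a finite bipartite graph (A-side vertices of
type `α`, B-side vertices of type `β`, edge set `E`) with edge weights `Weight`, and let
`l` be a feasible labeling (given by `la` on the A-side and `lb` on the B-side).
Let `S ⊆ A` be nonempty, `T = N_l(S) ≠ B`, suppose every pair `(a,b)` with `a ∈ S`,
`b ∉ T` is an edge, and let `αl` be the minimum of `l(a) + l(b) - Weight(a,b)` over
`a ∈ S`, `b ∉ T` (characterized by `hαl_le` and `hαl_mem`). Define `l'` by subtracting
`αl` on `S`, adding `αl` on `T`, and leaving other labels unchanged. Then `l'` is a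
feasible labeling of `G`. -/
theorem updated_labeling_is_feasible
    {α β : Type*} [Fintype α] [Fintype β] [DecidableEq α] [DecidableEq β]
    (E : Finset (α × β)) (Weight : α × β → ℝ)
    (la : α → ℝ) (lb : β → ℝ)
    (hfeas : ∀ e ∈ E, Weight e ≤ la e.1 + lb e.2)
    (S : Finset α) (hS : S.Nonempty)
    (T : Finset β)
    (hT : ∀ b, b ∈ T ↔ ∃ a ∈ S, (a, b) ∈ E ∧ la a + lb b = Weight (a, b))
    (hTneB : T ≠ Finset.univ)
    (hcomplete : ∀ a ∈ S, ∀ b ∉ T, (a, b) ∈ E)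
    (αl : ℝ)
    (hαl_le : ∀ a ∈ S, ∀ b ∉ T, αl ≤ la a + lb b - Weight (a, b))
    (hαl_mem : ∃ a ∈ S, ∃ b ∉ T, αl = la a + lb b - Weight (a, b))
    (la' : α → ℝ) (lb' : β → ℝ)
    (hla' : ∀ a, la' a = if a ∈ S then la a - αl else la a)
    (hlb' : ∀ b, lb' b = if b ∈ T then lb b + αl else lb b) :
    ∀ e ∈ E, Weight e ≤ la' e.1 + lb' e.2 := by
  have hα0 : 0 ≤ αl := by
    obtain ⟨a, ha, b, hb, hab⟩ := hαl_mem
    have := hfeas (a, b) (hcomplete a ha b hb)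
    simp at this; linarith
  rintro ⟨a, b⟩ he
  have hf := hfeas (a, b) he
  simp only [hla', hlb'] at *
  by_cases haS : a ∈ S <;> by_cases hbT : b ∈ T <;> simp [haS, hbT]
  · linarith
  · have := hαl_le a haS b hbT; linarith
  · linarith
  · linarith
end

section
/- Let G = (A ∪ B, E) be a finite bipartite graph with edge-weight function Weight, let l be a feasible labeling of G, and let M be a perfect matching of G all of whose edges lie in the equality graph E_l. Then M is a max-weight perfect matching: for every perfect matching M' of G, Weight(M') ≤ Weight(M). -/
lemma pm_sum_fst {α β : Type*} [Fintype α] (M : Finset (α × β))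
    (hA : ∀ a : α, ∃! b : β, (a, b) ∈ M)
    (hB : ∀ b : β, ∃! a : α, (a, b) ∈ M)
    (f : α → ℝ) : ∑ e ∈ M, f e.1 = ∑ a, f a := by
  apply Finset.sum_bij (fun e _ => e.1)
  · intro e he; exact Finset.mem_univ _
  · rintro ⟨a, b⟩ hab ⟨a', b'⟩ hab' (h : a = a')
    subst h
    have := (hA a).unique hab hab'
    simp [this]
  · intro a _
    obtain ⟨b, hb, -⟩ := hA a
    exact ⟨(a, b), hb, rfl⟩
  · intros; rfl

lemma pm_sum_snd {α β : Type*} [Fintype β] (M : Finset (α × β))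
    (hA : ∀ a : α, ∃! b : β, (a, b) ∈ M)
    (hB : ∀ b : β, ∃! a : α, (a, b) ∈ M)
    (g : β → ℝ) : ∑ e ∈ M, g e.2 = ∑ b, g b := by
  apply Finset.sum_bij (fun e _ => e.2)
  · intro e he; exact Finset.mem_univ _
  · rintro ⟨a, b⟩ hab ⟨a', b'⟩ hab' (h : b = b')
    subst h
    have := (hB b).unique hab hab'
    simp [this]
  · intro b _
    obtain ⟨a, ha, -⟩ := hB b
    exact ⟨(a, b), ha, rfl⟩
  · intros; rfl

/-- Let `G = (A ∪ B, E)` be a finite bipartite graph with edge weights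
`Weight`, let `l` be a feasible labeling of `G`, and let `M` be a perfect matching of `G`
all of whose edges lie in the equality graph `E_l`. Then `M` is a max-weight perfect
matching: for every perfect matching `M'` of `G`, `Weight(M') ≤ Weight(M)`. -/
theorem equality_perfect_matching_is_max_weight
    {α β : Type*} [Fintype α] [Fintype β] [DecidableEq α] [DecidableEq β]
    (E : Finset (α × β)) (Weight : α × β → ℝ)
    (la : α → ℝ) (lb : β → ℝ)
    (hfeas : ∀ e ∈ E, Weight e ≤ la e.1 + lb e.2)
    (M : Finset (α × β)) (hME : M ⊆ E)
    (hperfA : ∀ a : α, ∃! b : β, (a, b) ∈ M)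
    (hperfB : ∀ b : β, ∃! a : α, (a, b) ∈ M)
    (hEl : ∀ e ∈ M, la e.1 + lb e.2 = Weight e) :
    ∀ M' : Finset (α × β), M' ⊆ E →
      (∀ a : α, ∃! b : β, (a, b) ∈ M') →
      (∀ b : β, ∃! a : α, (a, b) ∈ M') →
      ∑ e ∈ M', Weight e ≤ ∑ e ∈ M, Weight e := by
  intro M' hM'E hA' hB'
  calc ∑ e ∈ M', Weight e
      ≤ ∑ e ∈ M', (la e.1 + lb e.2) :=
        Finset.sum_le_sum fun e he => hfeas e (hM'E he)
    _ = ∑ a, la a + ∑ b, lb b := by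
        rw [Finset.sum_add_distrib, pm_sum_fst M' hA' hB', pm_sum_snd M' hA' hB']
    _ = ∑ e ∈ M, (la e.1 + lb e.2) := by
        rw [Finset.sum_add_distrib, pm_sum_fst M hperfA hperfB, pm_sum_snd M hperfA hperfB]
    _ = ∑ e ∈ M, Weight e := Finset.sum_congr rfl hEl
end
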